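/- Every matroid that is binary or is a relaxation of a binary matroid has the property that for every element e, at least one of M\e and M/e is binary. -/

import Mathlib

set_option autoImplicit false

open Set

universe u v

namespace NearlyBinary

variable {α : Type u} {β : Type v}

/-- `C` is a circuit of `M`: a minimal dependent set. -/
def Circuit (M : Matroid α) (C : Set α) : Prop :=
  M.Dep C ∧ ∀ e ∈ C, M.Indep (C \ {e})

/-- `H` is a hyperplane of `M`: a maximal proper flat. -/
def Hyperplane (M : Matroid α) (H : Set α) : Prop :=
  M.IsFlat H ∧ H ≠ M.E ∧ ∀ F, M.IsFlat F → H ⊂ F → F = M.E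

/-- `H` is a circuit-hyperplane of `M`. -/
def CircuitHyperplane (M : Matroid α) (H : Set α) : Prop :=
  Circuit M H ∧ Hyperplane M H

/-- `M'` is the relaxation of `M` along `H` : same ground set, and the bases of `M'`
are the bases of `M` together with `H`. -/
def IsRelaxation (M : Matroid α) (H : Set α) (M' : Matroid α) : Prop :=
  M'.E = M.E ∧ ∀ B, M'.IsBase B ↔ (M.IsBase B ∨ B = H)

/-- Deletion of the set `D` from `M`. -/
def del (M : Matroid α) (D : Set α) : Matroid α := M.restrict (M.E \ D)

/-- Contraction of the set `C` in `M`. -/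
def con (M : Matroid α) (C : Set α) : Matroid α := ((M✶).restrict (M.E \ C))✶

/-- `N` is a minor of `M` (on the same type), obtained by a contraction and a deletion. -/
def IsMinorOf (N M : Matroid α) : Prop :=
  ∃ C D, C ⊆ M.E ∧ D ⊆ M.E ∧ Disjoint C D ∧ N = del (con M C) D

/-- `M` is binary: representable over `GF(2)`. -/
def IsBinary (M : Matroid α) : Prop :=
  ∃ (ι : Type u) (φ : α → ι → ZMod 2),
    ∀ I, I ⊆ M.E → (M.Indep I ↔ LinearIndependent (ZMod 2) (fun x : I => φ x.1))

def IsLoop (M : Matroid α) (e : α) : Prop := e ∈ M.E ∧ ¬ M.Indep {e}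

def IsColoop (M : Matroid α) (e : α) : Prop := e ∈ M.E ∧ ∀ B, M.IsBase B → e ∈ B

/-- `x` and `y` are parallel: distinct elements forming a two-element circuit. -/
def Parallel (M : Matroid α) (x y : α) : Prop := x ≠ y ∧ Circuit M {x, y}

/-- A separator of `M`: a set such that every circuit lies inside it or inside its complement. -/
def Separator (M : Matroid α) (S : Set α) : Prop :=
  S ⊆ M.E ∧ ∀ C, Circuit M C → C ⊆ S ∨ C ⊆ M.E \ S

/-- `M` is disconnected: its ground set is partitioned into two nonempty separators. -/
def Disconnected (M : Matroid α) : Prop :=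
  ∃ S, Separator M S ∧ S.Nonempty ∧ (M.E \ S).Nonempty

/-- `M` is connected (2-connected). -/
def Connected (M : Matroid α) : Prop := ¬ Disconnected M

/-- The rank (in `ℕ∞`) of a set `X` in `M`. -/
noncomputable def eRk (M : Matroid α) (X : Set α) : ℕ∞ :=
  ⨆ I ∈ {I | M.Indep I ∧ I ⊆ X}, I.encard

/-- `M` has a (Tutte) `k`-separation. -/
def HasSep (M : Matroid α) (k : ℕ) : Prop :=
  ∃ X, X ⊆ M.E ∧ (k : ℕ∞) ≤ X.encard ∧ (k : ℕ∞) ≤ (M.E \ X).encard ∧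
    eRk M X + eRk M (M.E \ X) ≤ eRk M M.E + ((k : ℕ∞) - 1)

/-- `M` is `n`-connected in the sense of Tutte. -/
def TutteConnected (n : ℕ) (M : Matroid α) : Prop :=
  ∀ k, 1 ≤ k → k < n → ¬ HasSep M k

/-- `M` is isomorphic to the uniform matroid `U_{r,m}`. -/
def IsUniform (M : Matroid α) (r m : ℕ) : Prop :=
  M.E.encard = m ∧ ∀ B, M.IsBase B ↔ (B ⊆ M.E ∧ B.encard = r)

/-- `M` is isomorphic to the direct sum `U_{n-1,n} ⊕ U_{1,k}`. -/
def IsUnifSumUnif (M : Matroid α) (n k : ℕ) : Prop :=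
  ∃ S P : Set α, Disjoint S P ∧ S ∪ P = M.E ∧ S.encard = n ∧ P.encard = k ∧
    ∀ B, M.IsBase B ↔ ∃ s ∈ S, ∃ p ∈ P, B = (S \ {s}) ∪ {p}

/-- `M` is the 2-sum of `M₁` and `M₂` with basepoint `p`, described by its circuits. -/
def IsTwoSum (M₁ M₂ : Matroid α) (p : α) (M : Matroid α) : Prop :=
  M₁.E ∩ M₂.E = {p} ∧
  ¬ IsLoop M₁ p ∧ ¬ IsColoop M₁ p ∧ ¬ IsLoop M₂ p ∧ ¬ IsColoop M₂ p ∧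
  M.E = (M₁.E ∪ M₂.E) \ {p} ∧
  ∀ C, Circuit M C ↔
    ((Circuit M₁ C ∧ p ∉ C) ∨ (Circuit M₂ C ∧ p ∉ C) ∨
      ∃ C₁ C₂, Circuit M₁ C₁ ∧ Circuit M₂ C₂ ∧ p ∈ C₁ ∧ p ∈ C₂ ∧
        C = (C₁ \ {p}) ∪ (C₂ \ {p}))

/-- `M` is isomorphic to `N`. -/
def Iso (M : Matroid β) (N : Matroid α) : Prop :=
  ∃ f : β → α, Set.BijOn f M.E N.E ∧ ∀ I, I ⊆ M.E → (M.Indep I ↔ N.Indep (f '' I))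

/-- `M` is the vector matroid, with ground set `G`, of the vectors `φ` over `GF(2)`. -/
def IsVecMatroid {ι : Type v} (M : Matroid α) (φ : α → ι → ZMod 2) (G : Set α) : Prop :=
  M.E = G ∧ ∀ I, I ⊆ G → (M.Indep I ↔ LinearIndependent (ZMod 2) (fun x : I => φ x.1))


section Aux

open Matroid Submodule

variable {M : Matroid α} {e : α}

/-- The closure of any set is a flat. -/
lemma flat_closure' (M : Matroid α) (X : Set α) : M.IsFlat (M.closure X) := by
  rw [Matroid.closure_def]
  have hne : Nonempty {F // M.IsFlat F ∧ X ∩ M.E ⊆ F} :=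
    ⟨⟨M.E, M.ground_isFlat, inter_subset_right⟩⟩
  have h := Matroid.IsFlat.iInter (M := M)
    (Fs := fun F : {F // M.IsFlat F ∧ X ∩ M.E ⊆ F} => F.1) (fun F => F.2.1)
  rw [sInter_eq_iInter]
  exact h

/-- Deletions of a binary matroid are binary. -/
lemma IsBinary.del' (h : IsBinary M) (D : Set α) : IsBinary (del M D) := by
  obtain ⟨ι, φ, hφ⟩ := h
  refine ⟨ι, φ, fun I hI => ?_⟩
  have hI' : I ⊆ M.E \ D := hI
  rw [del, Matroid.restrict_indep_iff, and_iff_left hI',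
    hφ I (hI'.trans diff_subset)]

/-- Linear independence in the quotient by the span of `φ e` corresponds to linear
independence of the family extended by `e`. -/
lemma li_quotient_iff {ι : Type*} (φ : α → ι → ZMod 2) {I : Set α}
    (heI : e ∉ I) (hne : φ e ≠ (0 : ι → ZMod 2)) :
    LinearIndependent (ZMod 2) (fun x : I =>
        Submodule.Quotient.mk (p := span (ZMod 2) {φ e}) (φ x.1)) ↔
      LinearIndependent (ZMod 2) (fun x : ↑(insert e I) => φ x.1) := by
  classical
  set p : Submodule (ZMod 2) (ι → ZMod 2) := span (ZMod 2) {φ e} with hp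
  set u : Unit ⊕ ↥I → (ι → ZMod 2) := Sum.elim (fun _ => φ e) (fun x => φ x.1) with hu
  set h' : Unit ⊕ ↥I → ↥(insert e I) :=
    Sum.elim (fun _ => ⟨e, mem_insert _ _⟩) (fun x => ⟨x.1, mem_insert_of_mem _ x.2⟩) with hh'
  have hh'inj : Function.Injective h' := by
    rintro (a | a) (b | b) hab <;>
      simp only [hh', Sum.elim_inl, Sum.elim_inr, Subtype.mk.injEq] at hab
    · rfl
    · exact absurd (by rw [hab]; exact b.2) heI
    · exact absurd (by rw [← hab]; exact a.2) heI
    · exact congrArg Sum.inr (Subtype.ext hab)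
  set h : ↥(insert e I) → Unit ⊕ ↥I :=
    fun x => if hx : x.1 ∈ I then Sum.inr ⟨x.1, hx⟩ else Sum.inl () with hh
  have hinj : Function.Injective h := by
    intro x y hxy
    by_cases hx : x.1 ∈ I <;> by_cases hy : y.1 ∈ I <;>
      simp only [hh, hx, hy, dif_pos, dif_neg, not_false_iff, Sum.inr.injEq,
        Subtype.mk.injEq, reduceCtorEq] at hxy
    · exact Subtype.ext hxy
    · exact Subtype.ext ((x.2.resolve_right hx).trans (y.2.resolve_right hy).symm)
  have hcomp : (fun x : ↥(insert e I) => φ x.1) = u ∘ h := by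
    funext x
    by_cases hx : x.1 ∈ I
    · simp [hh, hu, hx]
    · have hxe : x.1 = e := x.2.resolve_right hx
      simp only [hh, Function.comp_apply]
      rw [dif_neg hx, hxe]
      rfl
  have hcomp' : u = (fun x : ↥(insert e I) => φ x.1) ∘ h' := by
    funext x
    cases x <;> rfl
  constructor
  · intro hq
    set f : Unit → p := fun _ => ⟨φ e, subset_span rfl⟩ with hf
    have hfli : LinearIndependent (ZMod 2) f := by
      rw [linearIndependent_unique_iff]
      exact fun h0 => hne (congrArg Subtype.val h0)
    have hsum := LinearIndependent.sumElim_of_quotient hfli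
      (fun x : I => φ x.1) hq
    have huli : LinearIndependent (ZMod 2) u := by
      have : (Sum.elim (fun i => (f i : ι → ZMod 2)) fun x : I => φ x.1) = u := by
        funext x; cases x <;> rfl
      rwa [this] at hsum
    rw [hcomp]
    exact huli.comp h hinj
  · intro hins
    have huli : LinearIndependent (ZMod 2) u := by
      rw [hcomp']
      exact hins.comp h' hh'inj
    obtain ⟨h1, h2, hdisj⟩ := linearIndependent_sum.mp huli
    have hrange : Set.range (u ∘ Sum.inl) = {φ e} := by
      rw [hu]; simp [Set.range_const]
    have hdisj' : Disjoint (span (ZMod 2) (Set.range (u ∘ Sum.inr)))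
        (LinearMap.ker p.mkQ) := by
      rw [Submodule.ker_mkQ, hp, ← hrange]
      exact hdisj.symm
    have := h2.map hdisj'
    exact this
  
/-- Characterisation of the bases of a single-element contraction of a non-loop. -/
lemma con_base_iff (he : e ∈ M.E) (hnl : M.Indep {e}) {B : Set α} :
    (con M {e}).IsBase B ↔ B ⊆ M.E \ {e} ∧ M.IsBase (insert e B) := by
  set R : Set α := M.E \ {e} with hR
  have hRE : R ⊆ M✶.E := diff_subset
  have hsp : M✶.Spanning R := by
    obtain ⟨B0, hB0, heB0⟩ := hnl.exists_isBase_superset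
    exact hB0.compl_isBase_dual.spanning.superset
      (diff_subset_diff_right heB0) hRE
  have hset : ∀ B' : Set α, R \ B' = M✶.E \ insert e B' := by
    intro B'
    ext x
    simp only [hR, mem_diff, Matroid.dual_ground, mem_insert_iff, mem_singleton_iff]
    tauto
  constructor
  · intro hB
    rw [con, Matroid.dual_isBase_iff'] at hB
    obtain ⟨hB1, hB2⟩ := hB
    have hB2' : B ⊆ R := hB2
    have hbasis : M✶.IsBasis' (R \ B) R := Matroid.isBase_restrict_iff'.mp hB1
    have hbasis' : M✶.IsBasis (R \ B) R := hbasis.isBasis hRE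
    have hXbase : M✶.IsBase (R \ B) := by
      have hclos : M✶.closure (R \ B) = M✶.E := by
        rw [hbasis'.closure_eq_closure, hsp.closure_eq]
      exact hbasis'.indep.isBase_of_spanning ⟨hclos, hbasis'.indep.subset_ground⟩
    rw [hset B] at hXbase
    have hXbase' : M✶.IsBase (M.E \ insert e B) := hXbase
    have hins : insert e B ⊆ M.E := insert_subset he (hB2'.trans diff_subset)
    have hfin := (Matroid.dual_isBase_iff (M := M) diff_subset).mp hXbase'
    rw [diff_diff_cancel_left hins] at hfin
    exact ⟨hB2', hfin⟩
  · rintro ⟨hBR, hbase⟩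
    rw [con, Matroid.dual_isBase_iff']
    refine ⟨?_, hBR⟩
    rw [Matroid.isBase_restrict_iff']
    have hdb : M✶.IsBase (R \ B) := by
      rw [hset B]
      exact hbase.compl_isBase_dual
    exact ((hdb.isBasis_ground).isBasis_subset diff_subset hRE).isBasis'

/-- Characterisation of independence in a single-element contraction of a non-loop. -/
lemma con_indep_iff (he : e ∈ M.E) (hnl : M.Indep {e}) {I : Set α}
    (hIR : I ⊆ M.E \ {e}) :
    (con M {e}).Indep I ↔ M.Indep (insert e I) := by
  rw [Matroid.indep_iff]
  constructor
  · rintro ⟨B, hB, hIB⟩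
    rw [con_base_iff he hnl] at hB
    exact hB.2.indep.subset (insert_subset_insert hIB)
  · intro h
    obtain ⟨B, hB, hsub⟩ := h.exists_isBase_superset
    refine ⟨B \ {e}, (con_base_iff he hnl).mpr
      ⟨diff_subset_diff_left hB.subset_ground, ?_⟩, ?_⟩
    · rwa [insert_diff_singleton, insert_eq_of_mem (hsub (mem_insert _ _))]
    · exact subset_diff_singleton ((subset_insert e I).trans hsub)
        (fun heI => (hIR heI).2 rfl)

/-- Contraction of a non-loop element of a binary matroid is binary. -/
lemma IsBinary.con_elem (h : IsBinary M) (he : e ∈ M.E) (hnl : M.Indep {e}) :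
    IsBinary (con M {e}) := by
  obtain ⟨ι, φ, hφ⟩ := h
  have hφe : φ e ≠ 0 := by
    have h1 := (hφ {e} (singleton_subset_iff.mpr he)).mp hnl
    have h2 := (linearIndependent_unique_iff (v := fun x : ({e} : Set α) => φ x.1)).mp h1
    simpa using h2
  set p : Submodule (ZMod 2) (ι → ZMod 2) := span (ZMod 2) {φ e} with hp
  set b := Module.Basis.ofVectorSpace (ZMod 2) ((ι → ZMod 2) ⧸ p) with hb
  set F : ((ι → ZMod 2) ⧸ p) →ₗ[ZMod 2]
      (Module.Basis.ofVectorSpaceIndex (ZMod 2) ((ι → ZMod 2) ⧸ p) → ZMod 2) :=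
    Finsupp.lcoeFun.comp b.repr.toLinearMap with hF
  have hFker : LinearMap.ker F = ⊥ := by
    rw [LinearMap.ker_eq_bot]
    intro x y hxy
    have hxy' : (b.repr x : Module.Basis.ofVectorSpaceIndex (ZMod 2) ((ι → ZMod 2) ⧸ p) → ZMod 2)
        = (b.repr y : Module.Basis.ofVectorSpaceIndex (ZMod 2) ((ι → ZMod 2) ⧸ p) → ZMod 2) := hxy
    exact b.repr.injective (DFunLike.coe_injective hxy')
  refine ⟨_, fun a => F (Submodule.Quotient.mk (φ a)), fun I hI => ?_⟩
  have hIR : I ⊆ M.E \ {e} := hI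
  have heI : e ∉ I := fun h' => (hIR h').2 rfl
  rw [con_indep_iff he hnl hIR,
    hφ _ (insert_subset he (hIR.trans diff_subset)),
    ← li_quotient_iff φ heI hφe]
  exact (F.linearIndependent_iff hFker).symm

/-- A non-element of a flat is a non-loop. -/
lemma nonloop_of_not_mem_flat {N : Matroid α} {H : Set α} (hH : N.IsFlat H)
    (he : e ∈ N.E) (heH : e ∉ H) : N.Indep {e} := by
  by_contra hdep
  obtain ⟨J, hJ⟩ := N.exists_isBasis H hH.subset_ground
  have heJ : e ∉ J := fun h' => hdep (hJ.indep.subset (singleton_subset_iff.mpr h'))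
  have hecl : e ∈ N.closure J := by
    by_contra hcl
    exact hdep (((hJ.indep.insert_indep_iff_of_notMem heJ).mpr ⟨he, hcl⟩).subset
      (singleton_subset_iff.mpr (mem_insert _ _)))
  rw [hJ.closure_eq_closure, hH.closure] at hecl
  exact heH hecl

/-- Adding a point outside a hyperplane gives a spanning set. -/
lemma hyperplane_insert_spanning {N : Matroid α} {H : Set α} (hH : Hyperplane N H)
    (he : e ∈ N.E) (heH : e ∉ H) : N.Spanning (insert e H) := by
  have hHE : H ⊆ N.E := hH.1.subset_ground
  have hsub : insert e H ⊆ N.E := insert_subset he hHE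
  have hF : N.IsFlat (N.closure (insert e H)) := flat_closure' N _
  have hss : H ⊂ N.closure (insert e H) :=
    ⟨(subset_insert _ _).trans (N.subset_closure _ hsub),
      fun hcon => heH (hcon (N.subset_closure _ hsub (mem_insert _ _)))⟩
  exact ⟨hH.2.2 _ hF hss, hsub⟩

end Aux

/-- every matroid that is binary, or is a relaxation of a binary matroid,
has for each element a binary single-element deletion or contraction. -/
theorem binary_or_relaxation_mem_classZ {α : Type u} (M : Matroid α)
    (h : IsBinary M ∨ ∃ (N : Matroid α) (H : Set α),
        IsBinary N ∧ CircuitHyperplane N H ∧ IsRelaxation N H M) :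
    ∀ e ∈ M.E, IsBinary (del M {e}) ∨ IsBinary (con M {e}) := by
  intro e he
  rcases h with hbin | ⟨N, H, hNbin, ⟨hHcirc, hHhyp⟩, hrel⟩
  · exact Or.inl (hbin.del' {e})
  have hE : M.E = N.E := hrel.1
  have heN : e ∈ N.E := hE ▸ he
  by_cases heH : e ∈ H
  · left
    have hdel : del M {e} = del N {e} := by
      refine Matroid.ext_indep ?_ ?_
      · show (M.E \ {e} : Set α) = N.E \ {e}
        rw [hE]
      · intro I hI
        rw [del, del, Matroid.restrict_indep_iff, Matroid.restrict_indep_iff, hE]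
        have hIE : I ⊆ N.E \ {e} := by
          have : I ⊆ M.E \ {e} := hI
          rwa [hE] at this
        refine and_congr_left fun _ => ⟨fun hMI => ?_, fun hNI => ?_⟩
        · obtain ⟨B, hB, hIB⟩ := Matroid.indep_iff.mp hMI
          rcases (hrel.2 B).mp hB with hNB | rfl
          · exact hNB.indep.subset hIB
          · exact (hHcirc.2 e heH).subset
              (subset_diff_singleton hIB (fun h' => (hIE h').2 rfl))
        · obtain ⟨B, hB, hIB⟩ := Matroid.indep_iff.mp hNI
          exact Matroid.indep_iff.mpr ⟨B, (hrel.2 B).mpr (Or.inl hB), hIB⟩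
    rw [hdel]
    exact hNbin.del' {e}
  · right
    have hnl : N.Indep {e} := nonloop_of_not_mem_flat hHhyp.1 heN heH
    have hcon : con M {e} = con N {e} := by
      rw [con, con, hE]
      congr 1
      refine Matroid.ext_indep rfl ?_
      intro I hI
      rw [Matroid.restrict_indep_iff, Matroid.restrict_indep_iff]
      refine and_congr_left fun hIR => ?_
      rw [Matroid.dual_indep_iff_exists', Matroid.dual_indep_iff_exists', hE]
      refine and_congr_right fun hIE => ?_
      constructor
      · rintro ⟨B, hB, hdisj⟩
        rcases (hrel.2 B).mp hB with hNB | rfl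
        · exact ⟨B, hNB, hdisj⟩
        · obtain ⟨B0, hB0, hB0sub⟩ :=
            (hyperplane_insert_spanning hHhyp heN heH).exists_isBase_subset
          refine ⟨B0, hB0, Disjoint.mono_right hB0sub (Set.disjoint_right.mpr ?_)⟩
          intro a ha
          rw [Set.mem_insert_iff] at ha
          rcases ha with rfl | haH
          · exact fun h' => (hIR h').2 rfl
          · exact fun haI => Set.disjoint_left.mp hdisj haI haH
      · rintro ⟨B, hB, hdisj⟩
        exact ⟨B, (hrel.2 B).mpr (Or.inl hB), hdisj⟩
    rw [hcon]
    exact hNbin.con_elem heN hnl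

end NearlyBinary
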